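/- arXiv:1210.1805 — 6 statements merged into one kernel-verified Lean document; each statement's English description precedes it below -/
import Mathlib

section
/- For any graph G, the independence number α(G) is at most the annihilation number a(G). -/
open Finset

namespace DSI

variable {V : Type*} (G : SimpleGraph V) [Fintype V] [DecidableEq V] [DecidableRel G.Adj]

/-- The degree sequence of `G`, sorted in non-decreasing order. -/
def dseq : List ℕ := (Finset.univ.val.map (fun v => G.degree v)).sort (· ≤ ·)

/-- The sum of the `k` smallest degrees, `Σ_{i=1}^k d_i`. -/
def sumSmallest (k : ℕ) : ℕ := ((dseq G).take k).sum

/-- The sum of the `k` largest degrees, `Σ_{i=1}^k d_{n-i+1}`. -/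
def sumLargest (k : ℕ) : ℕ := ((dseq G).reverse.take k).sum

/-- The number of edges `m(G)`. -/
def esize : ℕ := G.edgeFinset.card

/-- `m[S]`: the number of edges of the subgraph induced by `S`. -/
def mOn (S : Finset V) : ℕ := (S.sym2.filter (fun e => e ∈ G.edgeSet)).card

/-- A set `I` is `j`-independent if every vertex of `I` has fewer than `j` neighbours in `I`,
i.e. the induced subgraph has maximum degree `< j`. -/
def JIndep (j : ℕ) (I : Finset V) : Prop := ∀ v ∈ I, (I.filter (G.Adj v)).card < j

/-- The `j`-independence number `α_j(G)`. -/
noncomputable def alphaJ (j : ℕ) : ℕ := sSup {k | ∃ I : Finset V, JIndep G j I ∧ I.card = k}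

/-- The family `F` of maximum `j`-independent sets. -/
noncomputable def maxJIndep (j : ℕ) : Set (Finset V) :=
  {S | JIndep G j S ∧ S.card = alphaJ G j}

/-- `max_{S ∈ F} (m[V−S] − m[S])`. -/
noncomputable def fU (j : ℕ) : ℤ :=
  sSup ((fun S : Finset V => (mOn G Sᶜ : ℤ) - (mOn G S : ℤ)) '' maxJIndep G j)

/-- `min_{S ∈ F} (m[V−S] − m[S])`. -/
noncomputable def fL (j : ℕ) : ℤ :=
  sInf ((fun S : Finset V => (mOn G Sᶜ : ℤ) - (mOn G S : ℤ)) '' maxJIndep G j)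

/-- The upper `j`-annihilation number `a_j(G)`. -/
noncomputable def aJ (j : ℕ) : ℕ :=
  sSup {k | k ≤ Fintype.card V ∧ (sumSmallest G k : ℤ) + fU G j ≤ (esize G : ℤ)}

/-- The lower `j`-annihilation number `c_j(G)`. -/
noncomputable def cJ (j : ℕ) : ℕ :=
  sInf {k | k ≤ Fintype.card V ∧ (esize G : ℤ) ≤ (sumLargest G k : ℤ) + fL G j}

/-- The annihilation number `a(G)`. -/
noncomputable def annihilation : ℕ :=
  sSup {k | k ≤ Fintype.card V ∧ sumSmallest G k ≤ esize G}

/-- An independent set. -/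
def IndepSet (I : Finset V) : Prop := ∀ v ∈ I, ∀ w ∈ I, ¬ G.Adj v w

/-- The independence number `α(G)`. -/
noncomputable def alpha : ℕ := sSup {k | ∃ I : Finset V, IndepSet G I ∧ I.card = k}

end DSI

/-! Take a maximum independent set `I`. No edge joins two vertices of `I`, so the edges incident
to its vertices are pairwise distinct and `Σ_{v ∈ I} deg v ≤ m(G)`. The `|I|` smallest degrees sum
to at most this, so `|I|` is admissible in the definition of `a(G)`. -/

namespace List

variable {α : Type*} [AddCommMonoid α] [PartialOrder α] [IsOrderedAddMonoid α]

theorem sum_take_cons_le_sum_take {a : α} {l : List α} (hl : (a :: l).Pairwise (· ≤ ·)) {k : ℕ}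
    (hk : k ≤ l.length) : ((a :: l).take k).sum ≤ (l.take k).sum := by
  cases k with
  | zero => simp
  | succ j =>
    have hj : j < l.length := hk
    have ha : a ≤ l[j] := (pairwise_cons.mp hl).1 _ (getElem_mem hj)
    rw [take_succ_cons, sum_cons, sum_take_succ _ _ hj, add_comm]
    exact add_le_add le_rfl ha

/-- In a sorted list, the smallest `k` entries form the prefix of length `k`, so no sublist
of length `k` has a smaller sum. -/
theorem sum_take_length_le_sum_of_sublist {l l' : List α} (hl : l.Pairwise (· ≤ ·))
    (h : l' <+ l) : (l.take l'.length).sum ≤ l'.sum := by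
  induction h with
  | slnil => simp
  | cons a h ih =>
    exact (sum_take_cons_le_sum_take hl h.length_le).trans (ih (pairwise_cons.mp hl).2)
  | cons_cons a _ ih =>
    rw [length_cons, take_succ_cons, sum_cons, sum_cons]
    exact add_le_add_right (ih (pairwise_cons.mp hl).2) a

end List

theorem Multiset.sum_take_sort_le_sum_of_le {α : Type*} [AddCommMonoid α] [LinearOrder α]
    [IsOrderedAddMonoid α] {s t : Multiset α} (h : t ≤ s) :
    ((s.sort (· ≤ ·)).take (Multiset.card t)).sum ≤ t.sum := by
  have hsub : (t.sort (· ≤ ·)).Sublist (s.sort (· ≤ ·)) := by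
    refine List.sublist_of_subperm_of_pairwise ?_ (Multiset.pairwise_sort _ _)
      (Multiset.pairwise_sort _ _)
    rwa [← Multiset.coe_le, Multiset.sort_eq, Multiset.sort_eq]
  have key := List.sum_take_length_le_sum_of_sublist (Multiset.pairwise_sort _ _) hsub
  rwa [Multiset.length_sort, ← Multiset.sum_coe (t.sort (· ≤ ·)), Multiset.sort_eq] at key

namespace DSI

variable {V : Type*} (G : SimpleGraph V) [Fintype V]

theorem exists_indepSet_card_eq_alpha : ∃ I : Finset V, IndepSet G I ∧ #I = alpha G :=
  Nat.sSup_mem (s := {k | ∃ I : Finset V, IndepSet G I ∧ #I = k}) ⟨0, ∅, by simp [IndepSet]⟩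
    ⟨Fintype.card V, by rintro _ ⟨I, -, rfl⟩; exact card_le_univ I⟩

variable [DecidableRel G.Adj]

theorem sumSmallest_card_le_sum_degree (I : Finset V) :
    sumSmallest G #I ≤ ∑ v ∈ I, G.degree v := by
  have h := Multiset.sum_take_sort_le_sum_of_le
    (Multiset.map_le_map (f := fun v => G.degree v) (Finset.val_le_iff.mpr (subset_univ I)))
  rwa [Multiset.card_map] at h

theorem sum_degree_le_esize [DecidableEq V] {I : Finset V} (hI : IndepSet G I) :
    ∑ v ∈ I, G.degree v ≤ esize G := by
  have hdisj : (I : Set V).PairwiseDisjoint fun v => G.incidenceFinset v := by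
    intro v hv w hw hvw
    rw [Function.onFun, ← Finset.disjoint_coe, SimpleGraph.coe_incidenceFinset,
      SimpleGraph.coe_incidenceFinset, Set.disjoint_iff_inter_eq_empty]
    exact G.incidenceSet_inter_incidenceSet_of_not_adj (hI v hv w hw) hvw
  calc ∑ v ∈ I, G.degree v = #(I.biUnion fun v => G.incidenceFinset v) := by
        simp_rw [card_biUnion hdisj, SimpleGraph.card_incidenceFinset_eq_degree]
    _ ≤ esize G := card_le_card (biUnion_subset.mpr fun v _ => G.incidenceFinset_subset v)

theorem le_annihilation [DecidableEq V] {k : ℕ} (hk : k ≤ Fintype.card V)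
    (hsum : sumSmallest G k ≤ esize G) : k ≤ annihilation G :=
  le_csSup ⟨Fintype.card V, fun _ hk => hk.1⟩ ⟨hk, hsum⟩

end DSI

theorem alpha_le_annihilation {V : Type*} (G : SimpleGraph V) [Fintype V]
    [DecidableEq V] [DecidableRel G.Adj] :
    DSI.alpha G ≤ DSI.annihilation G := by
  obtain ⟨I, hI, hcard⟩ := DSI.exists_indepSet_card_eq_alpha G
  rw [← hcard]
  exact DSI.le_annihilation G (card_le_univ I)
    ((DSI.sumSmallest_card_le_sum_degree G I).trans (DSI.sum_degree_le_esize G hI))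
end

section
/- For any positive integer j and any graph G, the lower j-annihilation number c_j(G) is at most the j-independence number α_j(G). -/
open Finset

/-!
Take a maximum `j`-independent set `S` attaining the minimum of `m[V−S] − m[S]`. Counting, edge
by edge, the endpoints that lie in `S` gives `Σ_{v∈S} d(v) + m[V−S] = m + m[S]`, and the degrees
of the `α_j` vertices of `S` sum to at most the `α_j` largest degrees. Hence `k = α_j` satisfies
the inequality defining `c_j`.
-/

namespace List

theorem sum_take_le_sum_take_cons {a : ℕ} {t : List ℕ} (h : (a :: t).Pairwise (· ≥ ·))
    (k : ℕ) : (t.take k).sum ≤ ((a :: t).take k).sum := by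
  induction t generalizing a k with
  | nil => simp
  | cons b t ih =>
    cases k with
    | zero => simp
    | succ k =>
      have hab : b ≤ a := (List.pairwise_cons.mp h).1 b List.mem_cons_self
      have := ih (List.pairwise_cons.mp h).2 k
      simp only [List.take_succ_cons, List.sum_cons]
      omega

theorem Sublist.sum_le_sum_take {l' l : List ℕ} (hsub : l' <+ l) (hl : l.Pairwise (· ≥ ·)) :
    l'.sum ≤ (l.take l'.length).sum := by
  induction hsub with
  | slnil => simp
  | cons _ _ ih =>
    exact (ih (List.pairwise_cons.mp hl).2).trans (sum_take_le_sum_take_cons hl _)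
  | cons_cons a _ ih =>
    simpa only [sum_cons, length_cons, take_succ_cons] using
      Nat.add_le_add_left (ih (List.pairwise_cons.mp hl).2) a

theorem sum_le_sum_take_of_le {l : List ℕ} (hl : l.Pairwise (· ≥ ·)) {s : Multiset ℕ}
    (hs : s ≤ l) : s.sum ≤ (l.take (Multiset.card s)).sum := by
  induction s using Quotient.inductionOn with
  | _ l₁ =>
  obtain ⟨l', hperm, hsub⟩ := Multiset.coe_le.mp hs
  simpa [← hperm.sum_eq, ← hperm.length_eq] using hsub.sum_le_sum_take hl

end List

namespace DSI

open SimpleGraph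

variable {V : Type*} (G : SimpleGraph V) [Fintype V] [DecidableRel G.Adj]

theorem sum_degree_le_sumLargest (T : Finset V) : ∑ v ∈ T, G.degree v ≤ sumLargest G #T := by
  have hsorted : (dseq G).reverse.Pairwise (· ≥ ·) :=
    List.pairwise_reverse.mpr (Multiset.pairwise_sort _ _)
  have hle : T.val.map (fun v => G.degree v) ≤ ((dseq G).reverse : Multiset ℕ) := by
    rw [Multiset.coe_reverse, dseq, Multiset.sort_eq]
    exact Multiset.map_le_map (Finset.val_le_iff.mpr (Finset.subset_univ T))
  simpa [sumLargest] using List.sum_le_sum_take_of_le hsorted hle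

theorem maxJIndep_nonempty (j : ℕ) : (maxJIndep G j).Nonempty := by
  set sizes := {k | ∃ I : Finset V, JIndep G j I ∧ #I = k}
  have hbdd : BddAbove sizes := ⟨Fintype.card V, by rintro _ ⟨I, -, rfl⟩; exact card_le_univ I⟩
  obtain ⟨I, hI, hcard⟩ := Nat.sSup_mem (s := sizes) ⟨0, ∅, by simp [JIndep]⟩ hbdd
  exact ⟨I, hI, hcard⟩

variable [DecidableEq V]

theorem mOn_eq_card_filter_edgeFinset (S : Finset V) :
    mOn G S = #{e ∈ G.edgeFinset | e ∈ S.sym2} := by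
  unfold mOn
  congr 1
  ext e
  simp only [mem_filter, mem_edgeFinset]
  tauto

theorem sum_degree_eq_sum_card_filter_mem (S : Finset V) :
    ∑ v ∈ S, G.degree v = ∑ e ∈ G.edgeFinset, #{v ∈ S | v ∈ e} := by
  simp_rw [← card_incidenceFinset_eq_degree, incidenceFinset_eq_filter]
  exact sum_card_bipartiteAbove_eq_sum_card_bipartiteBelow (· ∈ ·)

theorem card_filter_mem_add_ite_mem_sym2_compl (S : Finset V) {e : Sym2 V} (he : ¬ e.IsDiag) :
    #{v ∈ S | v ∈ e} + (if e ∈ Sᶜ.sym2 then 1 else 0) = 1 + if e ∈ S.sym2 then 1 else 0 := by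
  induction e using Sym2.inductionOn with
  | _ x y =>
  have hxy : x ≠ y := he
  by_cases hx : x ∈ S <;> by_cases hy : y ∈ S <;> simp [hx, hy, filter_or, filter_eq', hxy]

theorem sum_degree_add_mOn_compl (S : Finset V) :
    ∑ v ∈ S, G.degree v + mOn G Sᶜ = esize G + mOn G S := by
  rw [sum_degree_eq_sum_card_filter_mem, mOn_eq_card_filter_edgeFinset,
    mOn_eq_card_filter_edgeFinset, card_filter, card_filter, esize, card_eq_sum_ones,
    ← sum_add_distrib, ← sum_add_distrib]
  exact sum_congr rfl fun e he =>
    card_filter_mem_add_ite_mem_sym2_compl S (G.not_isDiag_of_mem_edgeSet (mem_edgeFinset.mp he))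

theorem esize_le_sumLargest_add (S : Finset V) :
    (esize G : ℤ) ≤ sumLargest G #S + ((mOn G Sᶜ : ℤ) - mOn G S) := by
  have := sum_degree_add_mOn_compl G S
  have := sum_degree_le_sumLargest G S
  omega

theorem exists_mem_maxJIndep_fL_eq (j : ℕ) :
    ∃ S ∈ maxJIndep G j, fL G j = (mOn G Sᶜ : ℤ) - mOn G S := by
  obtain ⟨S, hS, hfS⟩ := ((maxJIndep_nonempty G j).image
    fun S ↦ (mOn G Sᶜ : ℤ) - mOn G S).csInf_mem (Set.toFinite _)
  exact ⟨S, hS, hfS.symm⟩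

end DSI

theorem cJ_le_alphaJ_general {V : Type*} (G : SimpleGraph V) [Fintype V]
    [DecidableEq V] [DecidableRel G.Adj] (j : ℕ) :
    DSI.cJ G j ≤ DSI.alphaJ G j := by
  obtain ⟨S, ⟨-, hcard⟩, hfL⟩ := DSI.exists_mem_maxJIndep_fL_eq G j
  refine Nat.sInf_le ⟨hcard ▸ S.card_le_univ, ?_⟩
  rw [hfL, ← hcard]
  exact DSI.esize_le_sumLargest_add G S

theorem cJ_le_alphaJ {V : Type*} (G : SimpleGraph V) [Fintype V]
    [DecidableEq V] [DecidableRel G.Adj] (j : ℕ) (hj : 1 ≤ j) :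
    DSI.cJ G j ≤ DSI.alphaJ G j :=
  cJ_le_alphaJ_general G j
end

section
/- If a graph G is regular and its vertex set can be partitioned into two maximum j-independent sets, then c_j(G) = α_j(G) = a_j(G) = n(G)/2. -/
open Finset

/-!
Splitting `V` into two maximum `j`-independent sets gives `n = 2 α_j`, so every `S ∈ F` has
`|S| = |V − S|`. In an `r`-regular graph the degree sums over `S` and `V − S` are then equal; each
is twice the number of edges inside plus the same cut, so `m[V − S] = m[S]` and both correction
terms vanish. All degrees being `r` and `m(G) = n r / 2 = α_j r`, the conditions defining `a_j` and
`c_j` become `k r ≤ α_j r` and `α_j r ≤ k r`. Finally `r > 0` unless `n = 0`: a nonempty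
`j`-independent set forces `j > 0`, and then the whole vertex set of an edgeless graph is
`j`-independent, so `α_j = n`.
-/

namespace DSI

variable {V : Type*} (G : SimpleGraph V) [Fintype V] [DecidableEq V] [DecidableRel G.Adj]

def inducedOn (S : Finset V) : SimpleGraph V where
  Adj v w := G.Adj v w ∧ v ∈ S ∧ w ∈ S
  symm := ⟨fun _ _ h => ⟨h.1.symm, h.2.2, h.2.1⟩⟩
  loopless := ⟨fun v h => G.loopless.irrefl v h.1⟩

instance (S : Finset V) : DecidableRel (inducedOn G S).Adj := fun _ _ => instDecidableAnd

lemma edgeFinset_inducedOn (S : Finset V) :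
    (inducedOn G S).edgeFinset = S.sym2.filter (· ∈ G.edgeSet) := by
  ext e
  induction e using Sym2.ind with
  | _ a b =>
    rw [SimpleGraph.mem_edgeFinset, SimpleGraph.mem_edgeSet, mem_filter, mk_mem_sym2_iff]
    exact ⟨fun ⟨hab, ha, hb⟩ => ⟨⟨ha, hb⟩, hab⟩, fun ⟨⟨ha, hb⟩, hab⟩ => ⟨hab, ha, hb⟩⟩

lemma degree_inducedOn (S : Finset V) (v : V) :
    (inducedOn G S).degree v = if v ∈ S then #{w ∈ S | G.Adj v w} else 0 := by
  rw [SimpleGraph.degree, SimpleGraph.neighborFinset_eq_filter]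
  split_ifs with hv
  · congr 1; ext w; simp [inducedOn, hv, and_comm]
  · simp [inducedOn, hv]

lemma sum_card_filter_adj_self (S : Finset V) :
    ∑ v ∈ S, #{w ∈ S | G.Adj v w} = 2 * mOn G S := by
  rw [mOn, ← edgeFinset_inducedOn, ← SimpleGraph.sum_degrees_eq_twice_card_edges]
  simp [degree_inducedOn, Finset.sum_ite_mem]

omit [Fintype V] [DecidableEq V] in
lemma sum_card_filter_adj_comm (S T : Finset V) :
    ∑ v ∈ S, #{w ∈ T | G.Adj v w} = ∑ w ∈ T, #{v ∈ S | G.Adj w v} := by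
  simp only [card_filter]
  rw [sum_comm]
  simp only [G.adj_comm]

lemma sum_degree_eq_two_mul_mOn_add (S : Finset V) :
    ∑ v ∈ S, G.degree v = 2 * mOn G S + ∑ v ∈ S, #{w ∈ Sᶜ | G.Adj v w} := by
  rw [← sum_card_filter_adj_self, ← sum_add_distrib]
  refine sum_congr rfl fun v _ => ?_
  rw [SimpleGraph.degree, SimpleGraph.neighborFinset_eq_filter, ← union_compl S, filter_union,
    card_union_of_disjoint (disjoint_filter_filter disjoint_compl_right)]

omit [DecidableEq V] in
lemma sum_degree_of_isRegularOfDegree {r : ℕ} (hreg : G.IsRegularOfDegree r) (S : Finset V) :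
    ∑ v ∈ S, G.degree v = #S * r := by
  simp [hreg.degree_eq]

lemma mOn_compl_eq_of_card_eq {r : ℕ} (hreg : G.IsRegularOfDegree r) {S : Finset V}
    (hS : #Sᶜ = #S) : mOn G Sᶜ = mOn G S := by
  have hin := sum_degree_eq_two_mul_mOn_add G S
  have hout := sum_degree_eq_two_mul_mOn_add G Sᶜ
  rw [compl_compl, ← sum_card_filter_adj_comm] at hout
  rw [sum_degree_of_isRegularOfDegree G hreg] at hin hout
  rw [hS] at hout
  omega

section Regular

variable {G} {r : ℕ} (hreg : G.IsRegularOfDegree r)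
include hreg

omit [DecidableEq V] in
lemma dseq_eq_replicate : dseq G = List.replicate (Fintype.card V) r := by
  have hdeg : univ.val.map (fun v => G.degree v) = Multiset.replicate (Fintype.card V) r := by
    rw [show (fun v => G.degree v) = fun _ => r from funext hreg.degree_eq, Multiset.map_const',
      card_val, card_univ]
  rw [dseq, hdeg, ← Multiset.coe_replicate]
  exact List.perm_replicate.mp (Multiset.coe_eq_coe.mp (Multiset.sort_eq _ _))

omit [DecidableEq V] in
lemma sumSmallest_eq (k : ℕ) : sumSmallest G k = min k (Fintype.card V) * r := by
  simp [sumSmallest, dseq_eq_replicate hreg, List.take_replicate]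

omit [DecidableEq V] in
lemma sumLargest_eq (k : ℕ) : sumLargest G k = min k (Fintype.card V) * r := by
  simp [sumLargest, dseq_eq_replicate hreg, List.take_replicate]

omit [DecidableEq V] in
lemma two_mul_esize_eq : 2 * esize G = Fintype.card V * r := by
  rw [esize, ← SimpleGraph.sum_degrees_eq_twice_card_edges, sum_degree_of_isRegularOfDegree G hreg,
    card_univ]

end Regular

lemma aJ_le_card (j : ℕ) : aJ G j ≤ Fintype.card V :=
  csSup_le' fun _ hk => hk.1

lemma cJ_le_card (j : ℕ) : cJ G j ≤ Fintype.card V := by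
  rw [cJ]
  rcases Set.eq_empty_or_nonempty
    {k | k ≤ Fintype.card V ∧ (esize G : ℤ) ≤ (sumLargest G k : ℤ) + fL G j} with h | h
  · rw [h, Nat.sInf_empty]
    exact Nat.zero_le _
  · exact (Nat.sInf_mem h).1

section JIndependence

variable {G} {j : ℕ}

omit [DecidableEq V] in
lemma card_le_alphaJ {I : Finset V} (hI : JIndep G j I) : #I ≤ alphaJ G j :=
  le_csSup ⟨Fintype.card V, fun _ ⟨J, _, hJ⟩ => hJ ▸ card_le_univ J⟩ ⟨I, hI, rfl⟩

lemma two_mul_alphaJ_eq_card {A B : Finset V} (hA : A ∈ maxJIndep G j) (hB : B ∈ maxJIndep G j)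
    (hAB : Disjoint A B) (hcover : A ∪ B = univ) : 2 * alphaJ G j = Fintype.card V := by
  rw [← card_univ, ← hcover, card_union_of_disjoint hAB, hA.2, hB.2, two_mul]

omit [DecidableEq V] in
lemma pos_of_isRegularOfDegree {r : ℕ} (hreg : G.IsRegularOfDegree r) {A : Finset V}
    (hA : A ∈ maxJIndep G j) (h2 : 2 * alphaJ G j = Fintype.card V) (hV : 0 < Fintype.card V) :
    0 < r := by
  obtain ⟨v, hv⟩ : A.Nonempty := card_pos.mp (by rw [hA.2]; omega)
  have hj : 0 < j := (Nat.zero_le _).trans_lt (hA.1 v hv)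
  by_contra! hr
  have huniv : JIndep G j univ := fun w _ => by
    rw [← SimpleGraph.neighborFinset_eq_filter, SimpleGraph.card_neighborFinset_eq_degree,
      hreg.degree_eq]
    omega
  have := card_le_alphaJ huniv
  rw [card_univ] at this
  omega

variable {r : ℕ} (hreg : G.IsRegularOfDegree r) (h2 : 2 * alphaJ G j = Fintype.card V)
include hreg h2

lemma image_mOn_compl_sub_mOn_eq_zero (hne : (maxJIndep G j).Nonempty) :
    (fun S : Finset V => (mOn G Sᶜ : ℤ) - (mOn G S : ℤ)) '' maxJIndep G j = {0} := by
  refine (hne.image _).subset_singleton_iff.mp ?_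
  rintro _ ⟨S, hS, rfl⟩
  dsimp only
  rw [Set.mem_singleton_iff, mOn_compl_eq_of_card_eq G hreg (by rw [card_compl, hS.2]; omega),
    sub_self]

lemma fU_eq_zero (hne : (maxJIndep G j).Nonempty) : fU G j = 0 := by
  rw [fU, image_mOn_compl_sub_mOn_eq_zero hreg h2 hne, csSup_singleton]

lemma fL_eq_zero (hne : (maxJIndep G j).Nonempty) : fL G j = 0 := by
  rw [fL, image_mOn_compl_sub_mOn_eq_zero hreg h2 hne, csInf_singleton]

omit [DecidableEq V] in
lemma esize_eq_alphaJ_mul : esize G = alphaJ G j * r := by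
  have := two_mul_esize_eq hreg
  rw [← h2, mul_assoc] at this
  omega

lemma aJ_eq_alphaJ (hr : 0 < r) (hfU : fU G j = 0) : aJ G j = alphaJ G j := by
  have hset : {k | k ≤ Fintype.card V ∧ (sumSmallest G k : ℤ) + fU G j ≤ (esize G : ℤ)} =
      Set.Iic (alphaJ G j) := by
    ext k
    rw [Set.mem_ofPred_eq, Set.mem_Iic, hfU, add_zero, esize_eq_alphaJ_mul hreg h2,
      sumSmallest_eq hreg]
    constructor
    · rintro ⟨hk, hle⟩
      rw [min_eq_left hk] at hle
      exact (Nat.mul_le_mul_right_iff hr).mp (by exact_mod_cast hle)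
    · intro hk
      have hkV : k ≤ Fintype.card V := by omega
      rw [min_eq_left hkV]
      exact ⟨hkV, by exact_mod_cast Nat.mul_le_mul_right r hk⟩
  rw [aJ, hset, csSup_Iic]

lemma cJ_eq_alphaJ (hr : 0 < r) (hfL : fL G j = 0) : cJ G j = alphaJ G j := by
  have hset : {k | k ≤ Fintype.card V ∧ (esize G : ℤ) ≤ (sumLargest G k : ℤ) + fL G j} =
      Set.Icc (alphaJ G j) (Fintype.card V) := by
    ext k
    rw [Set.mem_ofPred_eq, Set.mem_Icc, hfL, add_zero, esize_eq_alphaJ_mul hreg h2,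
      sumLargest_eq hreg, and_comm]
    refine and_congr_left fun hk => ?_
    rw [min_eq_left hk]
    exact_mod_cast Nat.mul_le_mul_right_iff hr
  rw [cJ, hset, csInf_Icc (by omega)]

end JIndependence

end DSI

theorem regular_partition_eq_general {V : Type*} (G : SimpleGraph V) [Fintype V]
    [DecidableEq V] [DecidableRel G.Adj] (j : ℕ)
    (hreg : ∃ r, G.IsRegularOfDegree r)
    (hpart : ∃ A B : Finset V, A ∈ DSI.maxJIndep G j ∧ B ∈ DSI.maxJIndep G j ∧
      Disjoint A B ∧ A ∪ B = Finset.univ) :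
    DSI.cJ G j = DSI.alphaJ G j ∧ DSI.alphaJ G j = DSI.aJ G j ∧
      2 * DSI.alphaJ G j = Fintype.card V := by
  obtain ⟨r, hreg⟩ := hreg
  obtain ⟨A, B, hA, hB, hAB, hcover⟩ := hpart
  have h2 := DSI.two_mul_alphaJ_eq_card hA hB hAB hcover
  rcases Nat.eq_zero_or_pos (Fintype.card V) with hV | hV
  · have hc := DSI.cJ_le_card G j
    have ha := DSI.aJ_le_card G j
    exact ⟨by omega, by omega, h2⟩
  have hr := DSI.pos_of_isRegularOfDegree hreg hA h2 hV
  exact ⟨DSI.cJ_eq_alphaJ hreg h2 hr (DSI.fL_eq_zero hreg h2 ⟨A, hA⟩),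
    (DSI.aJ_eq_alphaJ hreg h2 hr (DSI.fU_eq_zero hreg h2 ⟨A, hA⟩)).symm, h2⟩

theorem regular_partition_eq {V : Type*} (G : SimpleGraph V) [Fintype V]
    [DecidableEq V] [DecidableRel G.Adj] (j : ℕ) (hj : 1 ≤ j)
    (hreg : ∃ r, G.IsRegularOfDegree r)
    (hpart : ∃ A B : Finset V, A ∈ DSI.maxJIndep G j ∧ B ∈ DSI.maxJIndep G j ∧
      Disjoint A B ∧ A ∪ B = Finset.univ) :
    DSI.cJ G j = DSI.alphaJ G j ∧ DSI.alphaJ G j = DSI.aJ G j ∧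
      2 * DSI.alphaJ G j = Fintype.card V :=
  regular_partition_eq_general G j hreg hpart
end

section
/- Let G be the graph obtained from two disjoint copies of K_p (p ≥ 3) by adding a perfect matching between them. Then α(G) = 2 while a(G) = p. -/
open Finset

/-- Two disjoint copies of `K_p` (indexed by `Fin 2`) joined by a perfect matching:
`(a, i)` and `(b, k)` are adjacent iff they are distinct and either lie in the same
copy (`a = b`) or are matched (`i = k`). -/
def matchedCliques (p : ℕ) : SimpleGraph (Fin 2 × Fin p) :=
  SimpleGraph.fromRel (fun v w => v.1 = w.1 ∨ v.2 = w.2)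

instance (p : ℕ) : DecidableRel (matchedCliques p).Adj := fun v w =>
  decidable_of_iff _ (SimpleGraph.fromRel_adj _ v w).symm

section Aux

variable (p : ℕ)

lemma mc_adj (v w : Fin 2 × Fin p) :
    (matchedCliques p).Adj v w ↔ v ≠ w ∧ (v.1 = w.1 ∨ v.2 = w.2) := by
  rw [matchedCliques, SimpleGraph.fromRel_adj]
  constructor
  · rintro ⟨h, (h' | h') | (h' | h')⟩ <;> exact ⟨h, by tauto⟩
  · rintro ⟨h, h'⟩; exact ⟨h, Or.inl h'⟩

lemma mc_degree (hp : 0 < p) (v : Fin 2 × Fin p) : (matchedCliques p).degree v = p := by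
  classical
  rw [SimpleGraph.degree]
  have h1 : (matchedCliques p).neighborFinset v =
      ((({v.1} : Finset (Fin 2)) ×ˢ (Finset.univ : Finset (Fin p))) ∪
        ((Finset.univ : Finset (Fin 2)) ×ˢ ({v.2} : Finset (Fin p)))).erase v := by
    ext w
    simp only [SimpleGraph.mem_neighborFinset, mc_adj, Finset.mem_erase, Finset.mem_union,
      Finset.mem_product, Finset.mem_singleton, Finset.mem_univ, true_and, and_true]
    constructor
    · rintro ⟨h, h'⟩
      exact ⟨Ne.symm h, by tauto⟩
    · rintro ⟨h, h'⟩
      exact ⟨Ne.symm h, by tauto⟩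
  have hA : ((({v.1} : Finset (Fin 2)) ×ˢ (Finset.univ : Finset (Fin p)))).card = p := by
    simp
  have hB : (((Finset.univ : Finset (Fin 2)) ×ˢ ({v.2} : Finset (Fin p)))).card = 2 := by
    simp
  have hI : ((({v.1} : Finset (Fin 2)) ×ˢ (Finset.univ : Finset (Fin p))) ∩
      ((Finset.univ : Finset (Fin 2)) ×ˢ ({v.2} : Finset (Fin p)))) = {v} := by
    ext w
    simp only [Finset.mem_inter, Finset.mem_product, Finset.mem_singleton, Finset.mem_univ,
      true_and, and_true]
    constructor
    · rintro ⟨h1, h2⟩; exact Prod.ext h1 h2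
    · rintro rfl; exact ⟨rfl, rfl⟩
  have hU : ((({v.1} : Finset (Fin 2)) ×ˢ (Finset.univ : Finset (Fin p))) ∪
      ((Finset.univ : Finset (Fin 2)) ×ˢ ({v.2} : Finset (Fin p)))).card = p + 1 := by
    have := Finset.card_union_add_card_inter
      ((({v.1} : Finset (Fin 2)) ×ˢ (Finset.univ : Finset (Fin p))))
      (((Finset.univ : Finset (Fin 2)) ×ˢ ({v.2} : Finset (Fin p))))
    rw [hA, hB, hI, Finset.card_singleton] at this
    omega
  have hv : v ∈ ((({v.1} : Finset (Fin 2)) ×ˢ (Finset.univ : Finset (Fin p))) ∪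
      ((Finset.univ : Finset (Fin 2)) ×ˢ ({v.2} : Finset (Fin p)))) := by
    simp
  rw [h1, Finset.card_erase_of_mem hv, hU]
  omega

lemma mc_esize (hp : 0 < p) : DSI.esize (matchedCliques p) = p * p := by
  have h := SimpleGraph.sum_degrees_eq_twice_card_edges (matchedCliques p)
  have h2 : ∑ v : Fin 2 × Fin p, (matchedCliques p).degree v = 2 * (p * p) := by
    simp only [mc_degree p hp]
    simp [Finset.card_univ]
    ring
  rw [h2] at h
  unfold DSI.esize
  omega

lemma mc_dseq (hp : 0 < p) : DSI.dseq (matchedCliques p) = List.replicate (2 * p) p := by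
  refine List.eq_replicate_iff.mpr ⟨?_, ?_⟩
  · unfold DSI.dseq
    rw [Multiset.length_sort, Multiset.card_map]
    simp [Finset.card_univ]
  · intro b hb
    unfold DSI.dseq at hb
    rw [Multiset.mem_sort, Multiset.mem_map] at hb
    obtain ⟨v, _, rfl⟩ := hb
    exact mc_degree p hp v

lemma mc_sumSmallest (hp : 0 < p) (k : ℕ) :
    DSI.sumSmallest (matchedCliques p) k = min k (2 * p) * p := by
  unfold DSI.sumSmallest
  rw [mc_dseq p hp, List.take_replicate, List.sum_replicate, smul_eq_mul]

lemma mc_annih (hp : 0 < p) : DSI.annihilation (matchedCliques p) = p := by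
  unfold DSI.annihilation
  have hset : {k | k ≤ Fintype.card (Fin 2 × Fin p) ∧
      DSI.sumSmallest (matchedCliques p) k ≤ DSI.esize (matchedCliques p)} = Set.Iic p := by
    ext k
    simp only [Set.mem_setOf_eq, Set.mem_Iic, mc_esize p hp, mc_sumSmallest p hp,
      Fintype.card_prod, Fintype.card_fin]
    constructor
    · rintro ⟨h1, h2⟩
      rw [min_eq_left h1] at h2
      exact Nat.le_of_mul_le_mul_right h2 hp
    · intro h
      refine ⟨by omega, ?_⟩
      rw [min_eq_left (by omega)]
      exact Nat.mul_le_mul_right _ h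
  rw [hset, csSup_Iic]

lemma mc_indep_card_le (I : Finset (Fin 2 × Fin p)) (h : DSI.IndepSet (matchedCliques p) I) :
    I.card ≤ 2 := by
  by_contra hc
  push_neg at hc
  have hcard : (Finset.univ : Finset (Fin 2)).card < I.card := by
    simp only [Finset.card_univ, Fintype.card_fin]
    omega
  obtain ⟨v, hv, w, hw, hvw, heq⟩ :=
    Finset.exists_ne_map_eq_of_card_lt_of_maps_to hcard (fun a _ => Finset.mem_univ a.1)
  exact h v hv w hw ((mc_adj p v w).mpr ⟨hvw, Or.inl heq⟩)

lemma mc_alpha (hp : 3 ≤ p) : DSI.alpha (matchedCliques p) = 2 := by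
  unfold DSI.alpha
  have hset : {k | ∃ I : Finset (Fin 2 × Fin p),
      DSI.IndepSet (matchedCliques p) I ∧ I.card = k} = Set.Iic 2 := by
    ext k
    simp only [Set.mem_setOf_eq, Set.mem_Iic]
    constructor
    · rintro ⟨I, hI, rfl⟩; exact mc_indep_card_le p I hI
    · intro hk
      interval_cases k
      · exact ⟨∅, by simp [DSI.IndepSet], rfl⟩
      · refine ⟨{((0 : Fin 2), (⟨0, by omega⟩ : Fin p))}, ?_, rfl⟩
        intro v hv w hw
        simp only [Finset.mem_singleton] at hv hw
        subst hv; subst hw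
        exact (matchedCliques p).irrefl
      · refine ⟨{((0 : Fin 2), (⟨0, by omega⟩ : Fin p)),
          ((1 : Fin 2), (⟨1, by omega⟩ : Fin p))}, ?_, ?_⟩
        · intro v hv w hw
          simp only [Finset.mem_insert, Finset.mem_singleton] at hv hw
          rw [mc_adj]
          rcases hv with rfl | rfl <;> rcases hw with rfl | rfl <;>
            simp [Fin.ext_iff, Prod.ext_iff]
        · rw [Finset.card_insert_of_notMem (by simp [Prod.ext_iff]), Finset.card_singleton]
  rw [hset, csSup_Iic]

end Aux

theorem matchedCliques_alpha_and_annihilation (p : ℕ) (hp : 3 ≤ p) :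
    DSI.alpha (matchedCliques p) = 2 ∧ DSI.annihilation (matchedCliques p) = p :=
  ⟨mc_alpha p hp, mc_annih p (by omega)⟩
end

section
/- Let p ≥ 3 be an integer and let G be a K_{1,p}-free graph with minimum degree δ(G). Then w(G) := max{k | Σ_{i=1}^k d_i + (1/2)Σ_{i=k+1}^n d_i − (n−k)(p−1)/2 ≤ m(G)} satisfies w(G) ≤ (p−1)n(G)/(δ(G) + p − 1). -/
open Finset

/-- `G` is `K_{1,p}`-free: it has no induced star `K_{1,p}`, i.e. no vertex `v` together
with a set `s` of `p` pairwise non-adjacent neighbours of `v`. -/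
def DSI.K1pFree {V : Type*} (G : SimpleGraph V) (p : ℕ) : Prop :=
  ¬ ∃ (v : V) (s : Finset V), s.card = p ∧ v ∉ s ∧ (∀ w ∈ s, G.Adj v w) ∧
      ∀ w ∈ s, ∀ u ∈ s, ¬ G.Adj w u

/-- The index `w(G) = max { k | Σ_{i=1}^k d_i + (1/2) Σ_{i=k+1}^n d_i
    - (n-k)(p-1)/2 ≤ m(G) }`. -/
noncomputable def DSI.wIdx {V : Type*} (G : SimpleGraph V) [Fintype V]
    [DecidableEq V] [DecidableRel G.Adj] (p : ℕ) : ℕ :=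
  sSup {k | k ≤ Fintype.card V ∧
    (DSI.sumSmallest G k : ℚ) + (1 / 2) * ((((DSI.dseq G).drop k).sum : ℕ) : ℚ)
      - ((Fintype.card V : ℚ) - (k : ℚ)) * ((p : ℚ) - 1) / 2 ≤ (DSI.esize G : ℚ)}
theorem wIdx_le_bound {V : Type*} (G : SimpleGraph V) [Fintype V] [Nonempty V]
    [DecidableEq V] [DecidableRel G.Adj] (p : ℕ) (hp : 3 ≤ p)
    (hfree : DSI.K1pFree G p) (hdelta : 1 ≤ G.minDegree) :
    (DSI.wIdx G p : ℚ) ≤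
      ((p : ℚ) - 1) * (Fintype.card V : ℚ) / ((G.minDegree : ℚ) + (p : ℚ) - 1) := by

  classical
  set n := Fintype.card V
  set δ := G.minDegree
  have hδpos : (0:ℚ) < (δ:ℚ) + (p:ℚ) - 1 := by
    have : (1:ℚ) ≤ (δ:ℚ) := by exact_mod_cast hdelta
    have hp3 : (3:ℚ) ≤ (p:ℚ) := by exact_mod_cast hp
    linarith
  -- total degree sum
  have hlen : (DSI.dseq G).length = n := by
    simp [DSI.dseq, n]
  have hsum : ((DSI.dseq G).sum : ℕ) = 2 * DSI.esize G := by
    have h1 : ((DSI.dseq G : Multiset ℕ)).sum = (Finset.univ.val.map (fun v => G.degree v)).sum := by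
      rw [DSI.dseq, Multiset.sort_eq]
    have h2 : (Finset.univ.val.map (fun v => G.degree v)).sum = ∑ v, G.degree v := rfl
    have := SimpleGraph.sum_degrees_eq_twice_card_edges G
    simpa [DSI.esize, h2, this] using h1
  have hmem : ∀ x ∈ DSI.dseq G, δ ≤ x := by
    intro x hx
    rw [DSI.dseq, Multiset.mem_sort, Multiset.mem_map] at hx
    obtain ⟨v, _, hv⟩ := hx
    exact hv ▸ G.minDegree_le_degree v
  -- every k in the set satisfies k ≤ bound
  have key : ∀ k ∈ {k | k ≤ n ∧
    (DSI.sumSmallest G k : ℚ) + (1 / 2) * ((((DSI.dseq G).drop k).sum : ℕ) : ℚ)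
      - ((n : ℚ) - (k : ℚ)) * ((p : ℚ) - 1) / 2 ≤ (DSI.esize G : ℚ)},
      (k : ℚ) ≤ ((p : ℚ) - 1) * (n : ℚ) / ((δ : ℚ) + (p : ℚ) - 1) := by
    intro k hk
    obtain ⟨hkn, hineq⟩ := hk
    have hsplit : DSI.sumSmallest G k + ((DSI.dseq G).drop k).sum = 2 * DSI.esize G := by
      rw [DSI.sumSmallest, ← List.sum_append, List.take_append_drop, hsum]
    have hsplitQ : ((((DSI.dseq G).drop k).sum : ℕ) : ℚ)
        = 2 * (DSI.esize G : ℚ) - (DSI.sumSmallest G k : ℚ) := by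
      have := congrArg (fun x : ℕ => (x : ℚ)) hsplit
      push_cast at this ⊢
      linarith
    rw [hsplitQ] at hineq
    -- so sumSmallest k ≤ (n-k)(p-1)
    have h1 : (DSI.sumSmallest G k : ℚ) ≤ ((n : ℚ) - (k : ℚ)) * ((p : ℚ) - 1) := by
      linarith
    -- lower bound on sumSmallest
    have htakelen : ((DSI.dseq G).take k).length = k := by
      rw [List.length_take, hlen]; omega
    have h2 : k * δ ≤ DSI.sumSmallest G k := by
      have := List.card_nsmul_le_sum ((DSI.dseq G).take k) δ
        (fun x hx => hmem x (List.mem_of_mem_take hx))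
      rwa [htakelen, smul_eq_mul] at this
    have h2Q : (k : ℚ) * (δ : ℚ) ≤ (DSI.sumSmallest G k : ℚ) := by exact_mod_cast h2
    rw [le_div_iff₀ hδpos]
    have hkQ : (k : ℚ) ≤ (n : ℚ) := by exact_mod_cast hkn
    nlinarith [h2Q, h1]
  -- conclude about the sSup
  have h0 : 0 ∈ {k | k ≤ n ∧
    (DSI.sumSmallest G k : ℚ) + (1 / 2) * ((((DSI.dseq G).drop k).sum : ℕ) : ℚ)
      - ((n : ℚ) - (k : ℚ)) * ((p : ℚ) - 1) / 2 ≤ (DSI.esize G : ℚ)} := by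
    constructor
    · exact Nat.zero_le n
    · have : (((DSI.dseq G).sum : ℕ) : ℚ) = 2 * (DSI.esize G : ℚ) := by exact_mod_cast hsum
      have hp3 : (3:ℚ) ≤ (p:ℚ) := by exact_mod_cast hp
      have hn0 : (0:ℚ) ≤ (n:ℚ) := Nat.cast_nonneg n
      simp only [DSI.sumSmallest, List.take_zero, List.sum_nil, List.drop_zero,
        Nat.cast_zero, this]
      nlinarith
  have hRHSnonneg : (0:ℚ) ≤ ((p : ℚ) - 1) * (n : ℚ) / ((δ : ℚ) + (p : ℚ) - 1) := by
    apply div_nonneg _ hδpos.le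
    have hp3 : (3:ℚ) ≤ (p:ℚ) := by exact_mod_cast hp
    have hn0 : (0:ℚ) ≤ (n:ℚ) := Nat.cast_nonneg n
    nlinarith
  have hbd : DSI.wIdx G p ≤ Nat.floor (((p : ℚ) - 1) * (n : ℚ) / ((δ : ℚ) + (p : ℚ) - 1)) := by
    apply csSup_le ⟨0, h0⟩
    intro k hk
    exact Nat.le_floor (key k hk)
  calc (DSI.wIdx G p : ℚ)
      ≤ (Nat.floor (((p : ℚ) - 1) * (n : ℚ) / ((δ : ℚ) + (p : ℚ) - 1)) : ℚ) := by
        exact_mod_cast hbd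
    _ ≤ ((p : ℚ) - 1) * (n : ℚ) / ((δ : ℚ) + (p : ℚ) - 1) := Nat.floor_le hRHSnonneg
end

section
/- Let j ≥ 1 and p ≥ 3 be integers, and let G be a K_{1,p}-free graph with minimum degree δ(G) ≥ j − 1. Then α_j(G) ≤ j(p−1)n(G) / (j(p−1) + δ(G) − (j−1)). -/
open Finset

/-!
Take a maximum `j`-independent set `I`. Its induced subgraph has maximum degree below `j`, so
greedily it contains an independent set `A` with `|I| ≤ j |A|`. Every vertex of `A` has at most
`j - 1` neighbours in `I`, hence at least `δ + 1 - j` outside `I`; every vertex outside `I` has at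
most `p - 1` neighbours in the independent set `A`, as `G` has no induced `K_{1,p}`. Counting the
edges between `A` and `V \ I` both ways gives `(δ + 1 - j) |A| ≤ (p - 1) (n - |I|)`, and combining
with `|I| ≤ j |A|` yields the bound.
-/

namespace DSI

lemma IndepSet.insert {V : Type*} {G : SimpleGraph V} [DecidableEq V] {A : Finset V} {v : V}
    (hA : IndepSet G A) (hv : ∀ w ∈ A, ¬ G.Adj v w) : IndepSet G (insert v A) := by
  simp only [IndepSet, mem_insert, forall_eq_or_imp]
  exact ⟨⟨G.loopless.irrefl v, hv⟩, fun w hw => ⟨fun h => hv w hw h.symm, hA w hw⟩⟩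

section

variable {V : Type*} {G : SimpleGraph V} [DecidableRel G.Adj] {j p : ℕ}

lemma JIndep.mono {I J : Finset V} (hI : JIndep G j I) (hJI : J ⊆ I) : JIndep G j J :=
  fun v hv => (card_le_card (filter_subset_filter _ hJI)).trans_lt (hI v (hJI hv))

lemma JIndep.exists_indepSet_subset [DecidableEq V] {I : Finset V} (hI : JIndep G j I) :
    ∃ A ⊆ I, IndepSet G A ∧ #I ≤ j * #A := by
  induction I using Finset.strongInduction with
  | _ I ih =>
    obtain rfl | ⟨v, hv⟩ := I.eq_empty_or_nonempty
    · exact ⟨∅, empty_subset _, by simp [IndepSet], by simp⟩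
    -- Keep `v` and discard its closed neighbourhood in `I`, which has at most `j` vertices.
    set N := insert v (I.filter (G.Adj v))
    have hN : #N ≤ j := (card_insert_le _ _).trans (hI v hv)
    obtain ⟨A, hAI, hA, hcard⟩ :=
      ih (I \ N) (sdiff_ssubset (insert_subset hv (filter_subset _ _)) ⟨v, mem_insert_self _ _⟩)
        (hI.mono sdiff_subset)
    have hvA : ∀ w ∈ A, ¬ G.Adj v w := fun w hw hvw =>
      (mem_sdiff.1 (hAI hw)).2 (mem_insert_of_mem (mem_filter.2 ⟨(mem_sdiff.1 (hAI hw)).1, hvw⟩))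
    have hvA' : v ∉ A := fun h => (mem_sdiff.1 (hAI h)).2 (mem_insert_self _ _)
    refine ⟨insert v A, insert_subset hv (hAI.trans sdiff_subset), hA.insert hvA, ?_⟩
    calc #I ≤ #(I \ N) + #N := card_le_card_sdiff_add_card
      _ ≤ j * #A + j := add_le_add hcard hN
      _ = j * #(insert v A) := by rw [card_insert_of_notMem hvA', mul_add_one]

lemma K1pFree.card_filter_adj_lt (hfree : K1pFree G p) {A : Finset V} (hA : IndepSet G A)
    {u : V} (hu : u ∉ A) : #(A.filter (G.Adj u)) < p := by
  by_contra! h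
  obtain ⟨s, hsA, hs⟩ := exists_subset_card_eq h
  exact hfree ⟨u, s, hs, fun hus => hu (mem_filter.1 (hsA hus)).1,
    fun w hw => (mem_filter.1 (hsA hw)).2,
    fun w hw x hx => hA w (mem_filter.1 (hsA hw)).1 x (mem_filter.1 (hsA hx)).1⟩

lemma exists_jIndep_card_eq_alphaJ [Fintype V] (j : ℕ) :
    ∃ I : Finset V, JIndep G j I ∧ #I = alphaJ G j :=
  Nat.sSup_mem (s := {k | ∃ I : Finset V, JIndep G j I ∧ #I = k})
    ⟨0, ∅, fun _ h => absurd h (notMem_empty _), card_empty⟩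
    ⟨Fintype.card V, by rintro k ⟨I, -, rfl⟩; exact card_le_univ I⟩

variable [Fintype V] [DecidableEq V]

lemma degree_eq_card_filter_adj_add_card_filter_adj_compl (s : Finset V) (v : V) :
    G.degree v = #(s.filter (G.Adj v)) + #(sᶜ.filter (G.Adj v)) := by
  rw [← card_union_of_disjoint (disjoint_filter_filter disjoint_compl_right), ← filter_union,
    union_compl, ← G.neighborFinset_eq_filter, G.card_neighborFinset_eq_degree]

lemma minDegree_add_one_sub_le_card_filter_adj_compl {I : Finset V} (hI : JIndep G j I) {v : V}
    (hv : v ∈ I) : G.minDegree + 1 - j ≤ #(Iᶜ.filter (G.Adj v)) := by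
  have := G.minDegree_le_degree v
  have := hI v hv
  have := degree_eq_card_filter_adj_add_card_filter_adj_compl (G := G) I v
  omega

lemma card_mul_le_card_compl_mul (hfree : K1pFree G p) {I A : Finset V} (hI : JIndep G j I)
    (hAI : A ⊆ I) (hA : IndepSet G A) :
    #A * (G.minDegree + 1 - j) ≤ #Iᶜ * (p - 1) :=
  card_mul_le_card_mul G.Adj
    (fun v hv => minDegree_add_one_sub_le_card_filter_adj_compl hI (hAI hv)) fun u hu => by
      have := hfree.card_filter_adj_lt hA fun huA => mem_compl.1 hu (hAI huA)
      simp only [bipartiteBelow, G.adj_comm _ u]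
      convert Nat.le_sub_one_of_lt this

end

end DSI

theorem alphaJ_K1pFree_bound_general {V : Type*} (G : SimpleGraph V) [Fintype V]
    [DecidableEq V] [DecidableRel G.Adj] (j p : ℕ) (hp : 3 ≤ p)
    (hfree : DSI.K1pFree G p) (hdelta : j - 1 ≤ G.minDegree) :
    (DSI.alphaJ G j : ℚ) ≤
      (j : ℚ) * ((p : ℚ) - 1) * (Fintype.card V : ℚ) /
        ((j : ℚ) * ((p : ℚ) - 1) + (G.minDegree : ℚ) - ((j : ℚ) - 1)) := by
  obtain ⟨I, hI, hIα⟩ := DSI.exists_jIndep_card_eq_alphaJ (G := G) j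
  rw [← hIα]
  obtain ⟨A, hAI, hA, hIA⟩ := hI.exists_indepSet_subset
  have hcount := DSI.card_mul_le_card_compl_mul hfree hI hAI hA
  rw [card_compl] at hcount
  have hIn : #I ≤ Fintype.card V := card_le_univ I
  have hjδ : j ≤ G.minDegree + 1 := by omega
  have hd : (0 : ℚ) ≤ G.minDegree - (j - 1) := by
    have : (j : ℚ) ≤ G.minDegree + 1 := by exact_mod_cast hjδ
    linarith
  have hcountQ : (#A : ℚ) * (G.minDegree - (j - 1)) ≤ (Fintype.card V - #I) * (p - 1) := by
    have := (Nat.cast_le (α := ℚ)).2 hcount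
    push_cast [hjδ, hIn, show 1 ≤ p by omega] at this
    linarith
  have hIAQ : (#I : ℚ) ≤ j * #A := by exact_mod_cast hIA
  have hp' : (3 : ℚ) ≤ p := by exact_mod_cast hp
  rw [le_div_iff₀ (by nlinarith)]
  nlinarith [mul_le_mul_of_nonneg_right hIAQ hd]

theorem alphaJ_K1pFree_bound {V : Type*} (G : SimpleGraph V) [Fintype V] [Nonempty V]
    [DecidableEq V] [DecidableRel G.Adj] (j p : ℕ) (hj : 1 ≤ j) (hp : 3 ≤ p)
    (hfree : DSI.K1pFree G p) (hdelta : j - 1 ≤ G.minDegree) :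
    (DSI.alphaJ G j : ℚ) ≤
      (j : ℚ) * ((p : ℚ) - 1) * (Fintype.card V : ℚ) /
        ((j : ℚ) * ((p : ℚ) - 1) + (G.minDegree : ℚ) - ((j : ℚ) - 1)) :=
  alphaJ_K1pFree_bound_general G j p hp hfree hdelta
end
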